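/- Let {aₙ}ₙ≥₀ be a nonnegative sequence with a_{n+1} ≤ c₄aₙ + c₅a_{n-1} + c₆λ^{n-1} + c₇ for n ≥ 1, where c₄, c₅, c₆, c₇ > 0, 0 < λ < 1, and c₄ + c₅ < 1. Set ξ₁ = (√(c₄²+4c₅)+c₄)/2 and ξ₂ = (√(c₄²+4c₅)-c₄)/2. Then ξ₁ < 1 and a_{n+1} ≤ ξ₁ⁿ(a₁ + ξ₂a₀) + c₆·(max(λ,ξ₁))^{n-1}/(1 - min(λ/ξ₁, ξ₁/λ)) + c₇/(1-ξ₁), provided λ ≠ ξ₁. -/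

import Mathlib

/-!
Since `ξ₁ - ξ₂ = c₄` and `ξ₁ ξ₂ = c₅`, the two-step inequality for `a` becomes the one-step
inequality `b (n+1) ≤ ξ₁ b n + c₆ λ^(n-1) + c₇` for `b (n+1) = a (n+1) + ξ₂ a n ≥ a (n+1)`.
Unrolling it, the `λ`-forcing contributes the convolution `∑ λ^i ξ₁^(n-1-i)`, which is at most
`max λ ξ₁ ^ (n-1)` times a geometric series in the ratio `min (λ/ξ₁) (ξ₁/λ) < 1`.
-/

open Finset

theorem le_pow_mul_add_sum_of_le_mul_add {R : Type*} [CommSemiring R] [PartialOrder R]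
    [IsOrderedRing R] {u f : ℕ → R} {q : R} (hq : 0 ≤ q)
    (h : ∀ n, u (n + 1) ≤ q * u n + f n) (n : ℕ) :
    u n ≤ q ^ n * u 0 + ∑ k ∈ range n, f k * q ^ (n - 1 - k) := by
  induction n with
  | zero => simp
  | succ n ih =>
    have hshift :
        q * ∑ k ∈ range n, f k * q ^ (n - 1 - k) = ∑ k ∈ range n, f k * q ^ (n - k) := by
      rw [mul_sum]
      refine sum_congr rfl fun k hk => ?_
      rw [show n - k = n - 1 - k + 1 by have := mem_range.mp hk; omega, pow_succ]
      ring
    calc u (n + 1) ≤ q * u n + f n := h n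
      _ ≤ q * (q ^ n * u 0 + ∑ k ∈ range n, f k * q ^ (n - 1 - k)) + f n := by gcongr
      _ = q ^ (n + 1) * u 0 + ∑ k ∈ range (n + 1), f k * q ^ (n + 1 - 1 - k) := by
        rw [mul_add, hshift, sum_range_succ]
        simp only [Nat.add_sub_cancel, Nat.sub_self, pow_zero, mul_one]
        ring

theorem geom_sum₂_le_of_lt {K : Type*} [Field K] [LinearOrder K] [IsStrictOrderedRing K]
    {x y : K} (hy : 0 ≤ y) (hyx : y < x) (n : ℕ) :
    ∑ i ∈ range n, x ^ i * y ^ (n - 1 - i) ≤ x ^ (n - 1) / (1 - y / x) := by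
  have hx : 0 < x := hy.trans_lt hyx
  have hratio : 0 < 1 - y / x := sub_pos.2 ((div_lt_one hx).2 hyx)
  cases n with
  | zero => simpa using hratio.le
  | succ m =>
    have hmul := geom_sum₂_mul x y (m + 1)
    rw [Nat.add_sub_cancel] at hmul ⊢
    rw [one_sub_div hx.ne', div_div_eq_mul_div, ← pow_succ, le_div_iff₀ (sub_pos.2 hyx)]
    linarith [pow_nonneg hy (m + 1)]

theorem geom_sum₂_le_max_div {K : Type*} [Field K] [LinearOrder K] [IsStrictOrderedRing K]
    {x y : K} (hx : 0 < x) (hy : 0 < y) (hne : x ≠ y) (n : ℕ) :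
    ∑ i ∈ range n, x ^ i * y ^ (n - 1 - i) ≤ max x y ^ (n - 1) / (1 - min (x / y) (y / x)) := by
  rcases hne.lt_or_gt with hxy | hyx
  · have hmin : min (x / y) (y / x) = x / y :=
      min_eq_left (((div_lt_one hy).2 hxy).le.trans ((one_lt_div hx).2 hxy).le)
    rw [max_eq_right hxy.le, hmin, geom_sum₂_comm]
    exact geom_sum₂_le_of_lt hx.le hxy n
  · have hmin : min (x / y) (y / x) = y / x :=
      min_eq_right (((div_lt_one hx).2 hyx).le.trans ((one_lt_div hy).2 hyx).le)
    rw [max_eq_left hyx.le, hmin]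
    exact geom_sum₂_le_of_lt hy.le hyx n

theorem discrete_gronwall_of_le_mul_add_pow_add {u : ℕ → ℝ} {q lam c d : ℝ}
    (hq : 0 < q) (hq1 : q < 1) (hlam : 0 < lam) (hne : lam ≠ q) (hc : 0 ≤ c) (hd : 0 ≤ d)
    (h : ∀ n, u (n + 1) ≤ q * u n + c * lam ^ n + d) (n : ℕ) :
    u n ≤ q ^ n * u 0 + c * max lam q ^ (n - 1) / (1 - min (lam / q) (q / lam))
      + d / (1 - q) := by
  -- Subtracting the fixed point `d / (1 - q)` of `x ↦ q * x + d` removes the constant forcing.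
  have hfix : q * (d / (1 - q)) + d = d / (1 - q) := by
    field_simp [(sub_pos.2 hq1).ne']
    ring
  have hshifted := le_pow_mul_add_sum_of_le_mul_add (u := fun n => u n - d / (1 - q))
    (f := fun n => c * lam ^ n) hq.le (fun n => by linarith [h n]) n
  simp only [mul_assoc, ← mul_sum] at hshifted
  have hgeom := mul_le_mul_of_nonneg_left (geom_sum₂_le_max_div hlam hq hne n) hc
  have hdrop : 0 ≤ q ^ n * (d / (1 - q)) := by have := sub_pos.2 hq1; positivity
  rw [mul_div_assoc]
  linarith [mul_sub (q ^ n) (u 0) (d / (1 - q))]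

theorem abs_lt_sqrt_sq_add {b c : ℝ} (hc : 0 < c) : |b| < √(b ^ 2 + c) := by
  rw [← Real.sqrt_sq_eq_abs]
  exact Real.sqrt_lt_sqrt (sq_nonneg b) (lt_add_of_pos_right _ hc)

theorem sqrt_sq_add_four_mul_add_div_two_lt_one {b c : ℝ} (hc : 0 ≤ c) (h : b + c < 1) :
    (√(b ^ 2 + 4 * c) + b) / 2 < 1 := by
  have : √(b ^ 2 + 4 * c) < 2 - b := (Real.sqrt_lt' (by linarith)).2 (by nlinarith)
  linarith

theorem discrete_gronwall_two_step_amb_general (a : ℕ → ℝ) (c₄ c₅ c₆ c₇ lam : ℝ)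
    (ha : ∀ n, 0 ≤ a n)
    (hc₅ : 0 < c₅) (hc₆ : 0 < c₆) (hc₇ : 0 < c₇)
    (hlam : 0 < lam) (hsum : c₄ + c₅ < 1)
    (hrec : ∀ n ≥ 1, a (n + 1) ≤ c₄ * a n + c₅ * a (n - 1) + c₆ * lam ^ (n - 1) + c₇)
    (ξ₁ ξ₂ : ℝ)
    (hξ₁ : ξ₁ = (Real.sqrt (c₄ ^ 2 + 4 * c₅) + c₄) / 2)
    (hξ₂ : ξ₂ = (Real.sqrt (c₄ ^ 2 + 4 * c₅) - c₄) / 2)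
    (hne : lam ≠ ξ₁) :
    ξ₁ < 1 ∧
    ∀ n ≥ 1,
      a (n + 1) ≤ ξ₁ ^ n * (a 1 + ξ₂ * a 0)
        + c₆ * (max lam ξ₁) ^ (n - 1) / (1 - min (lam / ξ₁) (ξ₁ / lam))
        + c₇ / (1 - ξ₁) := by
  have hs := abs_lt_sqrt_sq_add (b := c₄) (mul_pos four_pos hc₅)
  have hs2 : √(c₄ ^ 2 + 4 * c₅) ^ 2 = c₄ ^ 2 + 4 * c₅ := Real.sq_sqrt (by positivity)
  have hξ₁pos : 0 < ξ₁ := by rw [hξ₁]; linarith [abs_lt.mp hs]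
  have hξ₂pos : 0 < ξ₂ := by rw [hξ₂]; linarith [abs_lt.mp hs]
  have hξ₁lt : ξ₁ < 1 := hξ₁ ▸ sqrt_sq_add_four_mul_add_div_two_lt_one hc₅.le hsum
  have hdiff : ξ₁ - ξ₂ = c₄ := by rw [hξ₁, hξ₂]; ring
  have hprod : ξ₁ * ξ₂ = c₅ := by rw [hξ₁, hξ₂]; linear_combination hs2 / 4
  refine ⟨hξ₁lt, fun n _ => ?_⟩
  have hstep : ∀ m, a (m + 1 + 1) + ξ₂ * a (m + 1)
      ≤ ξ₁ * (a (m + 1) + ξ₂ * a m) + c₆ * lam ^ m + c₇ := fun m => by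
    have := hrec (m + 1) (Nat.le_add_left 1 m)
    simp only [Nat.add_sub_cancel] at this
    linear_combination this - a (m + 1) * hdiff - a m * hprod
  calc a (n + 1) ≤ a (n + 1) + ξ₂ * a n := le_add_of_nonneg_right (mul_nonneg hξ₂pos.le (ha n))
    _ ≤ _ := discrete_gronwall_of_le_mul_add_pow_add (u := fun m => a (m + 1) + ξ₂ * a m)
      hξ₁pos hξ₁lt hlam hne hc₆.le hc₇.le hstep n

theorem discrete_gronwall_two_step_amb (a : ℕ → ℝ) (c₄ c₅ c₆ c₇ lam : ℝ)
    (ha : ∀ n, 0 ≤ a n)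
    (hc₄ : 0 < c₄) (hc₅ : 0 < c₅) (hc₆ : 0 < c₆) (hc₇ : 0 < c₇)
    (hlam : 0 < lam) (hlam1 : lam < 1) (hsum : c₄ + c₅ < 1)
    (hrec : ∀ n ≥ 1, a (n + 1) ≤ c₄ * a n + c₅ * a (n - 1) + c₆ * lam ^ (n - 1) + c₇)
    (ξ₁ ξ₂ : ℝ)
    (hξ₁ : ξ₁ = (Real.sqrt (c₄ ^ 2 + 4 * c₅) + c₄) / 2)
    (hξ₂ : ξ₂ = (Real.sqrt (c₄ ^ 2 + 4 * c₅) - c₄) / 2)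
    (hne : lam ≠ ξ₁) :
    ξ₁ < 1 ∧
    ∀ n ≥ 1,
      a (n + 1) ≤ ξ₁ ^ n * (a 1 + ξ₂ * a 0)
        + c₆ * (max lam ξ₁) ^ (n - 1) / (1 - min (lam / ξ₁) (ξ₁ / lam))
        + c₇ / (1 - ξ₁) :=
  discrete_gronwall_two_step_amb_general a c₄ c₅ c₆ c₇ lam ha hc₅ hc₆ hc₇ hlam hsum hrec ξ₁ ξ₂ hξ₁
    hξ₂ hne
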